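/- Let x = (a_1,...,a_n) and y = (b_1,...,b_n) be rook-monoid sequences such that for some i, a_k = b_k for k < i and b_i > a_i. If y covers x in the Deodhar order, then ℓ(y) = ℓ(x) + 1 and y is obtained from x by a single elementary Pennell-Putcha-Renner move (either raising one entry or swapping two entries to decreasing position). -/

import Mathlib

/-- coinv: number of pairs i < j with 0 < a i < a j. -/
def coinv (n : ℕ) (a : Fin n → ℕ) : ℕ :=
  (Finset.univ.filter (fun p : Fin n × Fin n => p.1 < p.2 ∧ 0 < a p.1 ∧ a p.1 < a p.2)).card

/-- Length of a rook-monoid sequence: ∑_{i : a_i ≠ 0} (a_i + n - i) - coinv (1-based i). -/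
def rookLen (n : ℕ) (a : Fin n → ℕ) : ℤ :=
  (∑ i : Fin n, if a i ≠ 0 then ((a i : ℤ) + n - (i.val + 1)) else 0) - coinv n a

/-- A rook-monoid sequence: entries in {0,...,n} with distinct nonzero entries. -/
def IsRook (n : ℕ) (a : Fin n → ℕ) : Prop :=
  (∀ i, a i ≤ n) ∧ ∀ i j : Fin n, i ≠ j → a i ≠ 0 → a i ≠ a j

/-- Non-increasing rearrangement of a list. -/
def sortDesc (l : List ℕ) : List ℕ := l.insertionSort (· ≥ ·)

/-- Containment order: entrywise comparison of non-increasing rearrangements. -/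
def contLE (l m : List ℕ) : Prop := List.Forall₂ (· ≤ ·) (sortDesc l) (sortDesc m)

/-- Deodhar order: containment of all truncations. -/
def deodharLE (n : ℕ) (x y : Fin n → ℕ) : Prop :=
  ∀ k : ℕ, k ≤ n → contLE ((List.ofFn x).take k) ((List.ofFn y).take k)

/-- y covers x in the Deodhar order on rook-monoid sequences. -/
def deodharCovers (n : ℕ) (x y : Fin n → ℕ) : Prop :=
  deodharLE n x y ∧ x ≠ y ∧
    ¬∃ z : Fin n → ℕ, IsRook n z ∧
      deodharLE n x z ∧ x ≠ z ∧ deodharLE n z y ∧ z ≠ y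

/-- An elementary Pennell-Putcha-Renner move: raise one entry, or swap two entries
to put the larger one first. -/
def pprStep (n : ℕ) (x y : Fin n → ℕ) : Prop :=
  (∃ i : Fin n, x i < y i ∧ ∀ k, k ≠ i → x k = y k) ∨
  (∃ i j : Fin n, i < j ∧ y i = x j ∧ y j = x i ∧ x i < x j ∧
    ∀ k, k ≠ i → k ≠ j → x k = y k)

/-!
Write `countGE x k t` for the number of entries `≥ t` among the first `k` entries of `x`; then
`x ≤_D y` says exactly that `countGE x k t ≤ countGE y k t` for all `k` and `t`.

Let `i` be the first position where `a` and `b` differ. We build `z` with `a <_D z ≤_D b`, one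
PPR move away from `a` and with `ℓ(z) = ℓ(a) + 1`; the cover hypothesis then forces `z = b`.
Let `p ≥ i` be the last position (before `j`, in the first case) holding the value `a i`; this
is `i` itself unless `a i = 0`.
* If some `j > i` has `a i < a j ≤ b i`, take the least such `j` and swap positions `p` and `j`.
* Otherwise raise `a p` to the least value `v ∈ (a i, b i]` that does not occur in `a`.
Either move increases `countGE a k t` by one exactly when `p < k` (and `k ≤ j`) and
`a p < t ≤ z p`. For such `(k, t)` the count of `b` is strictly larger: compare both at the
threshold `b i + 1` and count the entries in `[t, b i]`; the positions before `i` agree, `b i`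
lies in this range but `a i` does not, and the choice of `j` (resp. `v`) leaves `a` no such
entry at the positions of `(i, k)`. The same extremal choices fix the change in the number of
coinversions so that it offsets the change of the weights `a_m + n - m` up to exactly one.
-/

open Finset

namespace List

variable {α : Type*} [LinearOrder α]

theorem countP_le_eq_zero_of_pairwise_cons {x t : α} {A : List α}
    (hA : (x :: A).Pairwise (· ≥ ·)) (ht : x < t) : A.countP (t ≤ ·) = 0 :=
  countP_eq_zero.2 fun b hb => by
    simpa using (rel_of_pairwise_cons hA hb).trans_lt ht

theorem forall₂_le_iff_countP_le : ∀ {A B : List α}, A.Pairwise (· ≥ ·) →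
    B.Pairwise (· ≥ ·) → A.length = B.length →
    (Forall₂ (· ≤ ·) A B ↔ ∀ t, A.countP (t ≤ ·) ≤ B.countP (t ≤ ·))
  | [], B, _, _, hlen => by simp [eq_nil_of_length_eq_zero hlen.symm]
  | _ :: _, [], _, _, hlen => by simp at hlen
  | x :: A, y :: B, hA, hB, hlen => by
    have ih := forall₂_le_iff_countP_le hA.of_cons hB.of_cons (by simpa using hlen)
    simp only [forall₂_cons, countP_cons, ih]
    constructor
    · rintro ⟨hxy, h⟩ t
      have := h t
      by_cases htx : t ≤ x
      · simp [htx, htx.trans hxy]; omega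
      · simp [htx]; omega
    · intro h
      have hxy : x ≤ y := by
        by_contra! hyx
        have := h x
        simp [countP_le_eq_zero_of_pairwise_cons hB hyx, hyx.not_ge] at this
      refine ⟨hxy, fun t => ?_⟩
      by_cases htx : t ≤ x
      · have := h t
        simp [htx, htx.trans hxy] at this; omega
      · simp [countP_le_eq_zero_of_pairwise_cons hA (not_le.1 htx)]

end List

theorem Fintype.sum_sub_sum_eq_of_eq_off {ι M : Type*} [Fintype ι] [AddCommGroup M]
    {f g : ι → M} (S : Finset ι) (h : ∀ m ∉ S, f m = g m) :
    ∑ m, f m - ∑ m, g m = ∑ m ∈ S, (f m - g m) := by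
  rw [← sum_sub_distrib]
  exact (Finset.sum_subset (subset_univ S) fun m _ hm => sub_eq_zero.2 (h m hm)).symm

theorem Fintype.sum_sum_eq_of_eq_zero_off {ι M : Type*} [Fintype ι] [DecidableEq ι]
    [AddCommMonoid M] (S : Finset ι) {D : ι → ι → M} (h : ∀ s ∉ S, ∀ t ∉ S, D s t = 0) :
    ∑ s, ∑ t, D s t = ∑ t, (∑ s ∈ S, D s t + if t ∈ S then 0 else ∑ u ∈ S, D t u) := by
  rw [sum_add_distrib, Finset.sum_comm (s := univ) (t := S),
    ← sum_add_sum_compl S (fun s => ∑ t, D s t), sum_ite, sum_const_zero, zero_add]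
  congr 1
  refine Finset.sum_congr (by ext; simp) fun s hs => ?_
  refine (Finset.sum_subset (subset_univ S) fun t _ ht => h s ?_ t ht).symm
  simpa using hs

theorem Function.comp_swap_apply_of_notMem {ι α : Type*} [DecidableEq ι] (f : ι → α)
    {p q m : ι} (hm : m ∉ ({p, q} : Finset ι)) : (f ∘ Equiv.swap p q) m = f m := by
  simp only [mem_insert, mem_singleton, not_or] at hm
  simp [Equiv.swap_apply_of_ne_of_ne hm.1 hm.2]

theorem Fin.exists_last_eq {n : ℕ} {α : Type*} (x : Fin n → α) {i : Fin n} {c : ℕ}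
    (hi : i.val < c) :
    ∃ p, i ≤ p ∧ p.val < c ∧ x p = x i ∧ ∀ m, p < m → m.val < c → x m ≠ x i := by
  obtain ⟨p, ⟨hip, hpc, hp⟩, hmax⟩ := exists_maximal_of_wellFoundedGT
    (fun m : Fin n => i ≤ m ∧ m.val < c ∧ x m = x i) ⟨i, le_rfl, hi, rfl⟩
  exact ⟨p, hip, hpc, hp, fun m hpm hmc hm =>
    (maximal_iff_forall_gt.1 ⟨⟨hip, hpc, hp⟩, hmax⟩).2 hpm ⟨hip.trans hpm.le, hmc, hm⟩⟩

theorem contLE_iff_countP_le {l m : List ℕ} (hlen : l.length = m.length) :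
    contLE l m ↔ ∀ t, l.countP (t ≤ ·) ≤ m.countP (t ≤ ·) := by
  have pl := List.perm_insertionSort (· ≥ ·) l
  have pm := List.perm_insertionSort (· ≥ ·) m
  rw [contLE, sortDesc, sortDesc, List.forall₂_le_iff_countP_le (List.pairwise_insertionSort _ l)
    (List.pairwise_insertionSort _ m) (by rw [pl.length_eq, pm.length_eq, hlen])]
  simp only [pl.countP_eq, pm.countP_eq]

section Counting

variable {n : ℕ}

def countGE (x : Fin n → ℕ) (k t : ℕ) : ℕ := #{m | m.val < k ∧ t ≤ x m}

theorem countGE_succ (x : Fin n → ℕ) {k : ℕ} (hk : k < n) (t : ℕ) :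
    countGE x (k + 1) t = countGE x k t + if t ≤ x ⟨k, hk⟩ then 1 else 0 := by
  rw [countGE, countGE, card_filter, card_filter,
    ← Fintype.sum_ite_eq' (⟨k, hk⟩ : Fin n) (fun m => if t ≤ x m then 1 else 0),
    ← sum_add_distrib]
  refine sum_congr rfl fun m _ => ?_
  have := Fin.ext_iff (a := (⟨k, hk⟩ : Fin n)) (b := m)
  split_ifs <;> simp_all <;> omega

theorem countP_take_ofFn (x : Fin n → ℕ) (t : ℕ) :
    ∀ k ≤ n, ((List.ofFn x).take k).countP (t ≤ ·) = countGE x k t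
  | 0, _ => by simp [countGE]
  | k + 1, hk => by
    rw [List.take_add_one, List.countP_append, countP_take_ofFn x t k (by omega),
      countGE_succ x hk]
    simp [show k < n by omega]

theorem deodharLE_iff_countGE_le (x y : Fin n → ℕ) :
    deodharLE n x y ↔ ∀ k ≤ n, ∀ t, countGE x k t ≤ countGE y k t := by
  refine forall₂_congr fun k hk => ?_
  rw [contLE_iff_countP_le (by simp)]
  simp only [countP_take_ofFn _ _ k hk]

theorem countGE_eq_sum (x : Fin n → ℕ) (k t : ℕ) :
    (countGE x k t : ℤ) = ∑ m, if m.val < k ∧ t ≤ x m then 1 else 0 := by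
  simp only [countGE, card_filter, Nat.cast_sum, Nat.cast_ite, Nat.cast_one, Nat.cast_zero]

theorem countGE_update (x : Fin n → ℕ) {p : Fin n} {v : ℕ} (hv : x p ≤ v) (k t : ℕ) :
    countGE (Function.update x p v) k t
      = countGE x k t + if p.val < k ∧ x p < t ∧ t ≤ v then 1 else 0 := by
  have h := Fintype.sum_sub_sum_eq_of_eq_off {p} fun m hm =>
    congrArg (fun y => if m.val < k ∧ t ≤ y then (1 : ℤ) else 0)
      (Function.update_of_ne (notMem_singleton.1 hm) v x)
  rw [← countGE_eq_sum, ← countGE_eq_sum, sum_singleton, Function.update_self] at h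
  split_ifs at h ⊢ <;> omega

theorem countGE_comp_swap (x : Fin n → ℕ) {p q : Fin n} (hpq : p < q) (hx : x p ≤ x q)
    (k t : ℕ) :
    countGE (x ∘ Equiv.swap p q) k t
      = countGE x k t + if p.val < k ∧ k ≤ q.val ∧ x p < t ∧ t ≤ x q then 1 else 0 := by
  have h := Fintype.sum_sub_sum_eq_of_eq_off {p, q}
    (f := fun m => if m.val < k ∧ t ≤ (x ∘ Equiv.swap p q) m then (1 : ℤ) else 0)
    (g := fun m => if m.val < k ∧ t ≤ x m then 1 else 0) fun m hm => by
    rw [Function.comp_swap_apply_of_notMem x hm]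
  rw [← countGE_eq_sum, ← countGE_eq_sum, sum_pair hpq.ne] at h
  simp only [Function.comp_apply, Equiv.swap_apply_left, Equiv.swap_apply_right] at h
  have : p.val < q.val := hpq
  split_ifs at h ⊢ <;> omega

theorem countGE_eq_countGE_add_card {x : Fin n → ℕ} {t s : ℕ} (hts : t ≤ s) (k : ℕ) :
    countGE x k t = countGE x k s + #{m | m.val < k ∧ t ≤ x m ∧ x m < s} := by
  rw [countGE, countGE, ← card_union_of_disjoint (disjoint_filter.2 fun _ _ h h' => by omega)]
  congr 1
  ext m
  simp only [mem_filter, mem_univ, true_and, mem_union]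
  omega

theorem countGE_add_one_le {a b : Fin n → ℕ} {i : Fin n} (hpre : ∀ m < i, a m = b m)
    {k t : ℕ} (hik : i.val < k) (ht : a i < t) (htb : t ≤ b i)
    (hgap : ∀ m, i < m → m.val < k → ¬(a i < a m ∧ a m ≤ b i))
    (hab : countGE a k (b i + 1) ≤ countGE b k (b i + 1)) :
    countGE a k t + 1 ≤ countGE b k t := by
  have hsub : ({m | m.val < k ∧ t ≤ a m ∧ a m < b i + 1} : Finset (Fin n))
      ⊆ ({m | m.val < k ∧ t ≤ b m ∧ b m < b i + 1} : Finset (Fin n)).erase i := by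
    intro m
    simp only [mem_filter, mem_univ, true_and, mem_erase]
    rintro ⟨hmk, htm, hms⟩
    rcases lt_trichotomy m i with hmi | rfl | hmi
    · have := hpre m hmi
      exact ⟨hmi.ne, hmk, by omega, by omega⟩
    · omega
    · exact absurd ⟨by omega, by omega⟩ (hgap m hmi hmk)
  have hi : i ∈ ({m | m.val < k ∧ t ≤ b m ∧ b m < b i + 1} : Finset (Fin n)) := by
    simp only [mem_filter, mem_univ, true_and]
    omega
  have hcard := card_le_card hsub
  rw [card_erase_of_mem hi] at hcard
  have := card_pos.2 ⟨i, hi⟩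
  rw [countGE_eq_countGE_add_card (show t ≤ b i + 1 by omega),
    countGE_eq_countGE_add_card (show t ≤ b i + 1 by omega)]
  omega

end Counting

section Length

variable {n : ℕ}

def coinvInd (x : Fin n → ℕ) (s t : Fin n) : ℤ := if s < t ∧ 0 < x s ∧ x s < x t then 1 else 0

def rookWeight (n : ℕ) (x : Fin n → ℕ) (i : Fin n) : ℤ :=
  if x i ≠ 0 then (x i : ℤ) + n - (i.val + 1) else 0

theorem coinv_sub_coinv {x y : Fin n → ℕ} (S : Finset (Fin n)) (h : ∀ m ∉ S, x m = y m) :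
    (coinv n x : ℤ) - coinv n y = ∑ t, (∑ s ∈ S, (coinvInd x s t - coinvInd y s t) +
      if t ∈ S then 0 else ∑ u ∈ S, (coinvInd x t u - coinvInd y t u)) := by
  have hsum : ∀ z : Fin n → ℕ, (coinv n z : ℤ) = ∑ s, ∑ t, coinvInd z s t := fun z => by
    simp only [coinv, coinvInd, card_filter, Nat.cast_sum, Nat.cast_ite, Nat.cast_one,
      Nat.cast_zero, Fintype.sum_prod_type]
  rw [hsum, hsum, ← sum_sub_distrib]
  simp_rw [← sum_sub_distrib]
  exact Fintype.sum_sum_eq_of_eq_zero_off S fun s hs t ht => by simp [coinvInd, h s hs, h t ht]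

theorem rookLen_sub_rookLen {x y : Fin n → ℕ} (S : Finset (Fin n)) (h : ∀ m ∉ S, x m = y m) :
    rookLen n x - rookLen n y
      = ∑ m ∈ S, (rookWeight n x m - rookWeight n y m) - ((coinv n x : ℤ) - coinv n y) := by
  have := Fintype.sum_sub_sum_eq_of_eq_off S (f := rookWeight n x) (g := rookWeight n y)
    fun m hm => by simp only [rookWeight, h m hm]
  simp only [rookLen, rookWeight] at this ⊢
  linarith

end Length

section Raise

variable {n : ℕ} {a : Fin n → ℕ} {p : Fin n} {v : ℕ}

theorem card_filter_lt_between (ha : IsRook n a)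
    (hbelow : ∀ w, a p < w → w < v → ∃ m < p, a m = w) :
    #{s | s < p ∧ a p < a s ∧ a s < v} = v - a p - 1 := by
  rw [← Nat.card_Ioo]
  refine card_nbij a (fun s hs => ?_) (fun s hs s' hs' hss' => ?_) (fun w hw => ?_)
  · simp only [coe_filter, Set.mem_ofPred_eq, mem_univ, true_and] at hs
    simpa using hs.2
  · simp only [coe_filter, Set.mem_ofPred_eq, mem_univ, true_and] at hs
    by_contra hne
    exact ha.2 s s' hne (by omega) hss'
  · simp only [coe_Ioo, Set.mem_Ioo] at hw
    obtain ⟨m, hmp, rfl⟩ := hbelow w hw.1 hw.2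
    exact ⟨m, by simpa using ⟨hmp, hw⟩, rfl⟩

theorem coinvInd_update (ha : IsRook n a) (hv : a p < v)
    (hafter : ∀ m, p < m → ¬(a p < a m ∧ a m ≤ v))
    (hzero : a p = 0 → ∀ m, p < m → v < a m) (t : Fin n) :
    (coinvInd (Function.update a p v) p t - coinvInd a p t) +
      (if t = p then 0 else coinvInd (Function.update a p v) t p - coinvInd a t p)
      = (if a p = 0 ∧ p < t then 1 else 0) + (if t < p ∧ a p < a t ∧ a t < v then 1 else 0) := by
  by_cases htp : t = p
  · subst htp
    simp [coinvInd]
  simp only [coinvInd, htp, if_false, Function.update_self, Function.update_of_ne htp]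
  rcases lt_or_gt_of_ne htp with htp' | hpt
  · have := imp_iff_not_or.1 (ha.2 t p htp)
    simp only [htp', htp'.not_gt, false_and, true_and, and_false, if_false]
    split_ifs <;> omega
  · have := hafter t hpt
    have := imp_iff_not_or.1 fun h => hzero h t hpt
    simp only [hpt, hpt.not_gt, false_and, true_and, and_true, if_false]
    split_ifs <;> omega

theorem coinv_update_sub_coinv (ha : IsRook n a) (hv : a p < v)
    (hbelow : ∀ w, a p < w → w < v → ∃ m < p, a m = w)
    (hafter : ∀ m, p < m → ¬(a p < a m ∧ a m ≤ v))
    (hzero : a p = 0 → ∀ m, p < m → v < a m) :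
    (coinv n (Function.update a p v) : ℤ) - coinv n a
      = (if a p = 0 then (n : ℤ) - p - 1 else 0) + (v - a p - 1 : ℕ) := by
  rw [coinv_sub_coinv {p} fun m hm => Function.update_of_ne (notMem_singleton.1 hm) v a]
  simp only [sum_singleton, mem_singleton]
  rw [Finset.sum_congr rfl fun t _ => coinvInd_update ha hv hafter hzero t, sum_add_distrib,
    sum_boole, sum_boole, card_filter_lt_between ha hbelow]
  by_cases hp : a p = 0
  · have : #{t | p < t} = n - 1 - p := by rw [← Fin.card_Ioi]; congr 1; ext; simp
    simp only [hp, true_and, if_true, this]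
    have := p.isLt
    push_cast [Nat.sub_sub, show (1 : ℕ) + p ≤ n by omega]
    ring
  · simp [hp]

theorem rookLen_update (ha : IsRook n a) (hv : a p < v)
    (hbelow : ∀ w, a p < w → w < v → ∃ m < p, a m = w)
    (hafter : ∀ m, p < m → ¬(a p < a m ∧ a m ≤ v))
    (hzero : a p = 0 → ∀ m, p < m → v < a m) :
    rookLen n (Function.update a p v) = rookLen n a + 1 := by
  have h := rookLen_sub_rookLen {p} fun m hm =>
    Function.update_of_ne (notMem_singleton.1 hm) v a
  rw [sum_singleton, coinv_update_sub_coinv ha hv hbelow hafter hzero] at h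
  simp only [rookWeight, Function.update_self] at h
  have := p.isLt
  split_ifs at h <;> omega

end Raise

section Swap

variable {n : ℕ} {a : Fin n → ℕ} {p q : Fin n}

/-- Only the pairs `(p, q)`, `(p, m)` and `(m, q)` with `p < m < q` change their relative order,
and the hypotheses keep every such `a m` out of `[a p, a q]`. -/
theorem coinvInd_comp_swap (ha : IsRook n a) (hpq : p < q) (hlt : a p < a q)
    (hgap : ∀ m, p < m → m < q → ¬(a p < a m ∧ a m < a q))
    (hzero : a p = 0 → ∀ m, p < m → m < q → a m ≠ 0) (t : Fin n) :
    ∑ s ∈ {p, q}, (coinvInd (a ∘ Equiv.swap p q) s t - coinvInd a s t) +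
      (if t ∈ ({p, q} : Finset (Fin n)) then 0
        else ∑ u ∈ {p, q}, (coinvInd (a ∘ Equiv.swap p q) t u - coinvInd a t u))
      = (if t = q ∧ a p ≠ 0 then -1 else 0) + (if a p = 0 ∧ p < t ∧ t < q then 1 else 0) := by
  simp only [sum_pair hpq.ne, mem_insert, mem_singleton, coinvInd, Function.comp_apply,
    Equiv.swap_apply_left, Equiv.swap_apply_right]
  by_cases htp : t = p
  · subst htp
    simp [hpq.ne, hpq.not_gt]
  by_cases htq : t = q
  · subst htq
    simp only [Equiv.swap_apply_right, hpq.ne', hpq, hlt, hlt.not_gt, lt_self_iff_false,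
      true_and, and_false, and_true, if_false, sub_zero, zero_sub, add_zero, false_or, if_true]
    split_ifs <;> omega
  have := imp_iff_not_or.1 (ha.2 t p htp)
  have := imp_iff_not_or.1 (ha.2 t q htq)
  rw [Equiv.swap_apply_of_ne_of_ne htp htq]
  simp only [htp, htq, or_self, if_false, false_and]
  rcases lt_or_gt_of_ne htp with htp' | hpt
  · have htq' := htp'.trans hpq
    simp only [htp', htq', htp'.not_gt, htq'.not_gt, false_and, true_and, and_false, if_false]
    split_ifs <;> omega
  rcases lt_or_gt_of_ne htq with htq' | hqt
  · have := hgap t hpt htq'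
    have := imp_iff_not_or.1 fun h => hzero h t hpt htq'
    simp only [hpt, htq', hpt.not_gt, htq'.not_gt, false_and, true_and, and_true, if_false]
    split_ifs <;> omega
  · have hpt := hpq.trans hqt
    simp only [hpt, hqt, hpt.not_gt, hqt.not_gt, false_and, true_and, and_false, if_false]
    split_ifs <;> omega

theorem coinv_comp_swap_sub_coinv (ha : IsRook n a) (hpq : p < q) (hlt : a p < a q)
    (hgap : ∀ m, p < m → m < q → ¬(a p < a m ∧ a m < a q))
    (hzero : a p = 0 → ∀ m, p < m → m < q → a m ≠ 0) :
    (coinv n (a ∘ Equiv.swap p q) : ℤ) - coinv n a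
      = if a p = 0 then (q : ℤ) - p - 1 else -1 := by
  rw [coinv_sub_coinv {p, q} fun m => Function.comp_swap_apply_of_notMem a,
    Finset.sum_congr rfl fun t _ => coinvInd_comp_swap ha hpq hlt hgap hzero t]
  by_cases hp : a p = 0
  · have : #{t | p < t ∧ t < q} = q - p - 1 := by rw [← Fin.card_Ioo]; congr 1; ext; simp
    simp only [hp, ne_eq, not_true_eq_false, and_false, if_false, true_and, if_true, zero_add,
      sum_boole, this]
    have : p.val < q.val := hpq
    push_cast [Nat.sub_sub, show p.val + 1 ≤ q.val by omega]
    ring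
  · simp [hp]

theorem rookLen_comp_swap (ha : IsRook n a) (hpq : p < q) (hlt : a p < a q)
    (hgap : ∀ m, p < m → m < q → ¬(a p < a m ∧ a m < a q))
    (hzero : a p = 0 → ∀ m, p < m → m < q → a m ≠ 0) :
    rookLen n (a ∘ Equiv.swap p q) = rookLen n a + 1 := by
  have h := rookLen_sub_rookLen {p, q} fun m => Function.comp_swap_apply_of_notMem a
  rw [sum_pair hpq.ne, coinv_comp_swap_sub_coinv ha hpq hlt hgap hzero] at h
  simp only [rookWeight, Function.comp_apply, Equiv.swap_apply_left,
    Equiv.swap_apply_right] at h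
  split_ifs at h <;> omega

end Swap

section Step

variable {n : ℕ} {a b : Fin n → ℕ}

theorem IsRook.comp_perm (ha : IsRook n a) (σ : Equiv.Perm (Fin n)) : IsRook n (a ∘ σ) :=
  ⟨fun _ => ha.1 _, fun _ _ hne h0 => ha.2 _ _ (σ.injective.ne hne) h0⟩

theorem IsRook.update (ha : IsRook n a) (p : Fin n) {v : ℕ} (hvn : v ≤ n)
    (hv : ∀ m, a m ≠ v) : IsRook n (Function.update a p v) := by
  refine ⟨fun m => ?_, fun m m' hne h0 => ?_⟩
  · rcases eq_or_ne m p with rfl | hm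
    · simpa using hvn
    · simpa [hm] using ha.1 m
  rcases eq_or_ne m p with rfl | hm
  · simpa [hne.symm] using (hv m').symm
  rcases eq_or_ne m' p with rfl | hm'
  · simpa [hm] using hv m
  · simp only [Function.update_of_ne hm, Function.update_of_ne hm'] at h0 ⊢
    exact ha.2 m m' hne h0

variable {i : Fin n}

theorem exists_swap_step_between (ha : IsRook n a) (hpre : ∀ m < i, a m = b m)
    (hab : deodharLE n a b) (hS : ∃ j, i < j ∧ a i < a j ∧ a j ≤ b i) :
    ∃ z, IsRook n z ∧ deodharLE n a z ∧ a ≠ z ∧ deodharLE n z b ∧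
      rookLen n z = rookLen n a + 1 ∧ pprStep n a z := by
  obtain ⟨j, ⟨hij, haj, hjb⟩, hjmin⟩ := exists_minimal_of_wellFoundedLT _ hS
  replace hjmin := (minimal_iff_forall_lt.1 ⟨⟨hij, haj, hjb⟩, hjmin⟩).2
  obtain ⟨p, hip, hpj, hpi, hplast⟩ := Fin.exists_last_eq a (Fin.lt_def.1 hij)
  replace hpj : p < j := Fin.lt_def.2 hpj
  have hlt : a p < a j := hpi ▸ haj
  rw [deodharLE_iff_countGE_le] at hab
  refine ⟨a ∘ Equiv.swap p j, ha.comp_perm _, ?lower, ?ne, ?upper, ?len,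
    Or.inr ⟨p, j, hpj, by simp, by simp, hlt, fun m hmp hmj => ?step⟩⟩
  case lower =>
    refine (deodharLE_iff_countGE_le _ _).2 fun k _ t => ?_
    rw [countGE_comp_swap a hpj hlt.le]
    omega
  case ne =>
    intro h
    have := congrFun h p
    simp only [Function.comp_apply, Equiv.swap_apply_left] at this
    omega
  case upper =>
    refine (deodharLE_iff_countGE_le _ _).2 fun k hk t => ?_
    rw [countGE_comp_swap a hpj hlt.le]
    split_ifs with h
    · exact countGE_add_one_le hpre (by omega) (by omega) (by omega)
        (fun m him hmk => hjmin (Fin.lt_def.2 (by omega)) ∘ And.intro him) (hab k hk _)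
    · simpa using hab k hk t
  case len =>
    refine rookLen_comp_swap ha hpj hlt (fun m hpm hmj h => ?_) (fun h0 m hpm hmj => ?_)
    · exact hjmin hmj ⟨lt_of_le_of_lt hip hpm, by omega, by omega⟩
    · exact hpi.symm.trans h0 ▸ hplast m hpm hmj
  case step => simp [Equiv.swap_apply_of_ne_of_ne hmp hmj]

theorem exists_raise_value (hb : IsRook n b) (hpre : ∀ m < i, a m = b m) (hlt : a i < b i)
    (hS : ∀ j, i < j → a i < a j → b i < a j) :
    ∃ v, a i < v ∧ v ≤ b i ∧ (∀ m, a m ≠ v) ∧ ∀ w, a i < w → w < v → ∃ m < i, a m = w := by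
  have hbi : ∀ m, a m ≠ b i := fun m => by
    rcases lt_trichotomy m i with hmi | rfl | hmi
    · rw [hpre m hmi]
      exact (hb.2 i m hmi.ne' (by omega)).symm
    · omega
    · exact fun h => (hS m hmi (h ▸ hlt)).ne' h
  obtain ⟨v, ⟨hiv, hvb, hv⟩, hvmin⟩ := exists_minimal_of_wellFoundedLT
    (fun v => a i < v ∧ v ≤ b i ∧ ∀ m, a m ≠ v) ⟨b i, hlt, le_rfl, hbi⟩
  replace hvmin := (minimal_iff_forall_lt.1 ⟨⟨hiv, hvb, hv⟩, hvmin⟩).2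
  refine ⟨v, hiv, hvb, hv, fun w hiw hwv => ?_⟩
  obtain ⟨m, rfl⟩ : ∃ m, a m = w := by
    by_contra! h
    exact hvmin hwv ⟨hiw, by omega, h⟩
  refine ⟨m, ?_, rfl⟩
  rcases lt_trichotomy m i with hmi | rfl | hmi
  · exact hmi
  · omega
  · exact absurd (hS m hmi hiw) (by omega)

theorem exists_raise_step_between (ha : IsRook n a) (hb : IsRook n b)
    (hpre : ∀ m < i, a m = b m) (hlt : a i < b i) (hab : deodharLE n a b)
    (hS : ∀ j, i < j → a i < a j → b i < a j) :
    ∃ z, IsRook n z ∧ deodharLE n a z ∧ a ≠ z ∧ deodharLE n z b ∧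
      rookLen n z = rookLen n a + 1 ∧ pprStep n a z := by
  obtain ⟨v, hiv, hvb, hv, hbelow⟩ := exists_raise_value hb hpre hlt hS
  obtain ⟨p, hip, -, hpi, hplast⟩ := Fin.exists_last_eq a i.isLt
  have hpv : a p < v := hpi ▸ hiv
  have hafter : ∀ m, p < m → ¬(a p < a m ∧ a m ≤ v) := fun m hpm h =>
    (hS m (lt_of_le_of_lt hip hpm) (hpi ▸ h.1)).not_ge (by omega)
  replace hbelow : ∀ w, a p < w → w < v → ∃ m < p, a m = w := fun w hpw hwv => by
    obtain ⟨m, hmi, rfl⟩ := hbelow w (hpi ▸ hpw) hwv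
    exact ⟨m, lt_of_lt_of_le hmi hip, rfl⟩
  have hzero : a p = 0 → ∀ m, p < m → v < a m := fun h0 m hpm => by
    have := hafter m hpm
    have := hplast m hpm m.isLt
    omega
  rw [deodharLE_iff_countGE_le] at hab
  refine ⟨Function.update a p v, ha.update p (hvb.trans (hb.1 i)) hv, ?lower, ?ne, ?upper,
    rookLen_update ha hpv hbelow hafter hzero,
    Or.inl ⟨p, by simpa using hpv, fun m hm => (Function.update_of_ne hm v a).symm⟩⟩
  case lower =>
    refine (deodharLE_iff_countGE_le _ _).2 fun k _ t => ?_
    rw [countGE_update a hpv.le]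
    omega
  case ne =>
    intro h
    have := congrFun h p
    simp only [Function.update_self] at this
    omega
  case upper =>
    refine (deodharLE_iff_countGE_le _ _).2 fun k hk t => ?_
    rw [countGE_update a hpv.le]
    split_ifs with h
    · exact countGE_add_one_le hpre (by omega) (by omega) (by omega)
        (fun m him _ hm => (hS m him hm.1).not_ge hm.2) (hab k hk _)
    · simpa using hab k hk t

theorem exists_ppr_step_between (ha : IsRook n a) (hb : IsRook n b)
    (hpre : ∀ m < i, a m = b m) (hlt : a i < b i) (hab : deodharLE n a b) :
    ∃ z, IsRook n z ∧ deodharLE n a z ∧ a ≠ z ∧ deodharLE n z b ∧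
      rookLen n z = rookLen n a + 1 ∧ pprStep n a z := by
  by_cases hS : ∃ j, i < j ∧ a i < a j ∧ a j ≤ b i
  · exact exists_swap_step_between ha hpre hab hS
  · push Not at hS
    exact exists_raise_step_between ha hb hpre hlt hab hS

end Step

theorem deodhar_cover_is_ppr (n : ℕ) (a b : Fin n → ℕ) (ha : IsRook n a) (hb : IsRook n b)
    (i : Fin n) (hpre : ∀ k, k < i → a k = b k) (hlt : a i < b i)
    (hcov : deodharCovers n a b) :
    rookLen n b = rookLen n a + 1 ∧ pprStep n a b := by
  obtain ⟨hab, -, hmin⟩ := hcov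
  obtain ⟨z, hz, haz, hne, hzb, hlen, hstep⟩ := exists_ppr_step_between ha hb hpre hlt hab
  obtain rfl : z = b := by_contra fun h => hmin ⟨z, hz, haz, hne, hzb, h⟩
  exact ⟨hlen, hstep⟩
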